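/- arXiv:math/0312218 — 5 statements merged into one kernel-verified Lean document; each statement's English description precedes it below -/
import Mathlib

section
/- Let G be a compact abelian group with Haar measure μ, let Ω ⊆ G be a 0-symmetric open set, and let Λ ⊆ G be a finite nonempty set with (Λ − Λ) ∩ Ω ⊆ {0}. Then every continuous positive definite function f : G → ℂ whose support is contained in Ω satisfies Re(∫_G f dμ) ≤ (μ(G)/#Λ) · f(0). -/
/-!
Testing positive definiteness of `f` with the points `Λ ∪ (Λ + x)` and weights `+1` on `Λ`,
`-1` on `Λ + x` gives, for every `x`,
`∑_{g,h ∈ Λ} Re f(g - h + x) ≤ ∑_{g,h ∈ Λ} Re f(g - h) = #Λ · Re f(0)`,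
the last equality because `f` vanishes on the nonzero differences of `Λ`. Integrating in `x`
against the translation invariant measure `μ` turns the left side into `#Λ² · Re ∫ f` and
the right side into `μ(G) · #Λ · Re f(0)`.
-/

open MeasureTheory Complex
open scoped ENNReal ComplexOrder Pointwise

/-- A function on an abelian group is positive definite. -/
def IsPosDefFn {G : Type*} [AddCommGroup G] (f : G → ℂ) : Prop :=
  ∀ (N : ℕ) (x : Fin N → G) (c : Fin N → ℂ),
    0 ≤ ∑ n : Fin N, ∑ m : Fin N, c n * (starRingEnd ℂ) (c m) * f (x n - x m)

namespace IsPosDefFn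

variable {G : Type*} [AddCommGroup G] {f : G → ℂ}

theorem sum_finset_nonneg (hf : IsPosDefFn f) {ι : Type*} (s : Finset ι) (p : ι → G)
    (c : ι → ℂ) : 0 ≤ ∑ i ∈ s, ∑ j ∈ s, c i * (starRingEnd ℂ) (c j) * f (p i - p j) := by
  have hreindex (φ : ι → ℂ) : ∑ i ∈ s, φ i = ∑ n : Fin s.card, φ (s.equivFin.symm n) := by
    rw [← Finset.sum_attach s φ]
    exact (Equiv.sum_comp s.equivFin.symm (fun a => φ a)).symm
  simp only [hreindex]
  exact hf s.card (fun n => p (s.equivFin.symm n)) (fun n => c (s.equivFin.symm n))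

theorem re_map_neg (hf : IsPosDefFn f) (y : G) : (f (-y)).re = (f y).re := by
  have him_zero : (f 0).im = 0 := by
    simpa using ((Complex.le_def.mp (hf 1 ![0] ![1])).2).symm
  -- `0 ≤ 2 f 0 + I (f y - f (-y))`, so its imaginary part `Re f y - Re f (-y)` vanishes
  have hpair := (Complex.le_def.mp (hf 2 ![0, y] ![1, I])).2
  simp only [Fin.sum_univ_two, Matrix.cons_val_zero, Matrix.cons_val_one, map_one, conj_I,
    one_mul, mul_one, sub_self, zero_sub, sub_zero, zero_im, add_im, mul_im, neg_im, mul_neg,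
    I_re, I_im, I_mul_I, him_zero, zero_mul, neg_mul, neg_neg, zero_add, add_zero] at hpair
  linarith

theorem sum_re_sub_add_le (hf : IsPosDefFn f) (Λ : Finset G) (x : G) :
    ∑ g ∈ Λ, ∑ h ∈ Λ, (f (g - h + x)).re ≤ ∑ g ∈ Λ, ∑ h ∈ Λ, (f (g - h)).re := by
  have key := (Complex.le_def.mp <| hf.sum_finset_nonneg (Λ ×ˢ (Finset.univ : Finset Bool))
    (fun q => q.1 + cond q.2 x 0) (fun q => cond q.2 (-1) 1)).1
  simp only [Finset.sum_product, Fintype.sum_bool, cond_true, cond_false, map_one, map_neg,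
    mul_one, one_mul, neg_mul, mul_neg, add_zero, add_sub_add_right_eq_sub, zero_re,
    re_sum, add_re, neg_re, Finset.sum_add_distrib, Finset.sum_neg_distrib] at key
  have hcross :
      ∑ g ∈ Λ, ∑ h ∈ Λ, (f (g - (h + x))).re = ∑ g ∈ Λ, ∑ h ∈ Λ, (f (g - h + x)).re := by
    conv_lhs => rw [Finset.sum_comm]
    refine Finset.sum_congr rfl fun g _ => Finset.sum_congr rfl fun h _ => ?_
    rw [← hf.re_map_neg]
    congr 2
    abel
  have hshift : ∑ g ∈ Λ, ∑ h ∈ Λ, (f (g + x - h)).re = ∑ g ∈ Λ, ∑ h ∈ Λ, (f (g - h + x)).re := by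
    simp only [sub_add_eq_add_sub]
  linarith

end IsPosDefFn

theorem Finset.sum_sum_sub_eq_card_nsmul {G M : Type*} [AddGroup G] [AddCommMonoid M]
    {φ : G → M} (Λ : Finset G) (hφ : ∀ g ∈ Λ, ∀ h ∈ Λ, g ≠ h → φ (g - h) = 0) :
    ∑ g ∈ Λ, ∑ h ∈ Λ, φ (g - h) = Λ.card • φ 0 := by
  rw [← Finset.sum_const]
  refine Finset.sum_congr rfl fun g hg => ?_
  rw [Finset.sum_eq_single_of_mem g hg fun h hh hne => hφ g hg h hh hne.symm, sub_self]

theorem MeasureTheory.integral_finset_sum_add_left {G E ι : Type*} [AddGroup G]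
    [MeasurableSpace G] [MeasurableAdd G] [NormedAddCommGroup E] [NormedSpace ℝ E]
    (μ : Measure G) [μ.IsAddLeftInvariant] {u : G → E} (hu : Integrable u μ)
    (s : Finset ι) (a : ι → G) :
    ∫ x, ∑ i ∈ s, u (a i + x) ∂μ = s.card • ∫ x, u x ∂μ := by
  rw [integral_finsetSum s fun i _ => hu.comp_add_left (a i), ← Finset.sum_const]
  exact Finset.sum_congr rfl fun i _ => integral_add_left_eq_self u (a i)

theorem turan_bound_from_packing_compact_general
    {G : Type*} [AddCommGroup G] [TopologicalSpace G] [IsTopologicalAddGroup G]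
    [CompactSpace G] [MeasurableSpace G] [BorelSpace G]
    (μ : Measure G) [μ.IsAddHaarMeasure]
    (Ω : Set G)
    (Λ : Finset G) (hΛne : Λ.Nonempty)
    (hΛΩ : ((Λ : Set G) - (Λ : Set G)) ∩ Ω ⊆ {0})
    (f : G → ℂ) (hf_cont : Continuous f) (hf_pd : IsPosDefFn f)
    (hf_supp : tsupport f ⊆ Ω) :
    (∫ x, f x ∂μ).re ≤ (μ Set.univ).toReal / (Λ.card : ℝ) * (f 0).re := by
  have hf_int : Integrable f μ :=
    hf_cont.integrable_of_hasCompactSupport (HasCompactSupport.of_compactSpace f)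
  have hcard : 0 < (Λ.card : ℝ) := by exact_mod_cast hΛne.card_pos
  have hdiag : ∑ g ∈ Λ, ∑ h ∈ Λ, (f (g - h)).re = Λ.card * (f 0).re := by
    rw [Finset.sum_sum_sub_eq_card_nsmul (φ := fun y => (f y).re), nsmul_eq_mul]
    intro g hg h hh hgh
    rw [image_eq_zero_of_notMem_tsupport fun hmem => hgh <| sub_eq_zero.mp <|
      hΛΩ ⟨Set.sub_mem_sub hg hh, hf_supp hmem⟩, zero_re]
  have htranslates : ∫ x, ∑ g ∈ Λ, ∑ h ∈ Λ, (f (g - h + x)).re ∂μ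
      = Λ.card * Λ.card * (∫ x, f x ∂μ).re := by
    simp_rw [← Finset.sum_product']
    rw [integral_finset_sum_add_left μ (u := fun y => (f y).re) hf_int.re (Λ ×ˢ Λ)
      (fun p => p.1 - p.2), Finset.card_product, nsmul_eq_mul, Nat.cast_mul]
    exact congrArg _ (integral_re hf_int)
  have hbound : ∫ x, ∑ g ∈ Λ, ∑ h ∈ Λ, (f (g - h + x)).re ∂μ
      ≤ ∫ _x, (Λ.card * (f 0).re : ℝ) ∂μ :=
    integral_mono (integrable_finsetSum _ fun g _ => integrable_finsetSum _
      fun h _ => hf_int.re.comp_add_left (g - h))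
      (integrable_const _) fun x => hdiag ▸ hf_pd.sum_re_sub_add_le Λ x
  rw [htranslates, integral_const, smul_eq_mul, measureReal_def] at hbound
  rw [div_mul_eq_mul_div, le_div_iff₀ hcard]
  refine le_of_mul_le_mul_left ?_ hcard
  linarith

theorem turan_bound_from_packing_compact
    {G : Type*} [AddCommGroup G] [TopologicalSpace G] [IsTopologicalAddGroup G]
    [CompactSpace G] [T2Space G] [MeasurableSpace G] [BorelSpace G]
    (μ : Measure G) [μ.IsAddHaarMeasure]
    (Ω : Set G) (hΩopen : IsOpen Ω) (hΩsym : Ω = -Ω)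
    (Λ : Finset G) (hΛne : Λ.Nonempty)
    (hΛΩ : ((Λ : Set G) - (Λ : Set G)) ∩ Ω ⊆ {0})
    (f : G → ℂ) (hf_cont : Continuous f) (hf_pd : IsPosDefFn f)
    (hf_supp : tsupport f ⊆ Ω) :
    (∫ x, f x ∂μ).re ≤ (μ Set.univ).toReal / (Λ.card : ℝ) * (f 0).re :=
  turan_bound_from_packing_compact_general μ Ω Λ hΛne hΛΩ f hf_cont hf_pd hf_supp
end

section
/- Let Λ ⊆ ℝ^d and ρ > 0 be such that Λ has upper density at least ρ, meaning: for every ε ∈ (0, ρ) and every R₀ > 0 there exist R ≥ R₀ and x ∈ ℝ^d such that the cube x + [0, R]^d contains at least (ρ − ε)·R^d points of Λ. Let Ω ⊆ ℝ^d be a 0-symmetric open set with Ω ∩ (Λ − Λ) ⊆ {0}. Then every continuous, Lebesgue-integrable, positive definite function f : ℝ^d → ℂ whose support is a compact subset of Ω satisfies Re(∫_{ℝ^d} f(x) dx) ≤ (1/ρ) · f(0). -/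
open MeasureTheory Complex
open scoped ENNReal ComplexOrder Pointwise

/-!
Let `F ⊆ Λ` be `K ≥ (ρ - ε) R^d` points in a cube `Q` of side `R`, let `C ⊇ Q` be the cube enlarged
by the radius `r` of the support of `f`, and let `μ` be normalized Lebesgue measure on `C`.
Positive definiteness of `f`, tested against the signed measure `∑_{a ∈ F} δ_a - w μ`
(approximated by `m` independent `μ`-samples with `m → ∞`), gives
`0 ≤ ∑_{a,b} f(a - b) - 2 w ∑_a ∫ f(a - y) dμ + w² ∬ f(x - y) dμ dμ` (real parts throughout).
The first sum is `K f(0)`, since differences of distinct points of `Λ` miss the support of `f`;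
each `f(a - ·)` is supported in `C`, so the middle term is `2 w K ∫ f / |C|`; and the double
integral is at most `(R^d ∫ f + (|C| - R^d) ‖f‖₁) / |C|²`. With `w = (ρ - ε)|C|` this yields
`(ρ - ε) ∫ f ≤ f(0) + O(r / R)`; let `R → ∞`, then `ε → 0`.
-/

open Filter Topology

section ProductMeasure

variable {α : Type*} [MeasurableSpace α] (μ : Measure α) [IsProbabilityMeasure μ] {m : ℕ}

lemma integral_pi_comp_eval {g : α → ℝ} (hg : Measurable g) (j : Fin m) :
    ∫ y, g (y j) ∂Measure.pi (fun _ => μ) = ∫ x, g x ∂μ := by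
  rw [← integral_map (measurable_pi_apply j).aemeasurable hg.aestronglyMeasurable,
    (measurePreserving_eval (fun _ => μ) j).map_eq]

lemma integral_pi_comp_eval_pair {g : α → α → ℝ} (hg : Measurable (Function.uncurry g))
    (hgi : Integrable (Function.uncurry g) (μ.prod μ)) {j k : Fin m} (hjk : j ≠ k) :
    ∫ y, g (y j) (y k) ∂Measure.pi (fun _ => μ) = ∫ x, ∫ y, g x y ∂μ ∂μ := by
  have hind := (ProbabilityTheory.iIndepFun_pi (μ := fun _ : Fin m => μ)
    (X := fun _ => id) fun _ => aemeasurable_id).indepFun hjk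
  have hmap := (ProbabilityTheory.indepFun_iff_map_prod_eq_prod_map_map
    (measurable_pi_apply j).aemeasurable (measurable_pi_apply k).aemeasurable).1 hind
  rw [(measurePreserving_eval (fun _ => μ) j).map_eq,
    (measurePreserving_eval (fun _ => μ) k).map_eq] at hmap
  calc ∫ y, g (y j) (y k) ∂Measure.pi (fun _ => μ)
      = ∫ p, Function.uncurry g p ∂(Measure.pi (fun _ => μ)).map fun y => (y j, y k) :=
        (integral_map (φ := fun y : Fin m → α => (y j, y k))
          ((measurable_pi_apply j).prodMk (measurable_pi_apply k)).aemeasurable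
          hg.aestronglyMeasurable).symm
    _ = ∫ x, ∫ y, g x y ∂μ ∂μ := by rw [hmap, integral_prod _ hgi]; rfl

end ProductMeasure

namespace IsPosDefFn

variable {G : Type*} [AddCommGroup G] {f : G → ℂ}

lemma re_apply_zero_nonneg (hf : IsPosDefFn f) : 0 ≤ (f 0).re := by
  simpa using (Complex.le_def.mp (hf 1 (fun _ => 0) (fun _ => 1))).1

lemma re_quadraticForm_nonneg (hf : IsPosDefFn f) {ι : Type*} [Fintype ι] (x : ι → G)
    (c : ι → ℝ) : 0 ≤ ∑ i, ∑ j, c i * c j * (f (x i - x j)).re := by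
  let e := (Fintype.equivFin ι).symm
  have h := (Complex.le_def.mp (hf _ (x ∘ e) fun n => (c (e n) : ℂ))).1
  simp only [Function.comp_apply, Complex.conj_ofReal, Complex.zero_re, Complex.re_sum,
    ← Complex.ofReal_mul, Complex.re_ofReal_mul] at h
  rwa [Finset.sum_congr rfl fun i _ => e.sum_comp (fun j => c (e i) * c j * (f (x (e i) - x j)).re),
    e.sum_comp (fun i => ∑ j, c i * c j * (f (x i - x j)).re)] at h

variable [MeasurableSpace G] [MeasurableSub₂ G]

/-- Apply positive definiteness to the points `a` together with `m` independent `μ`-distributed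
points, with weights `1` and `-w / m`, and average; the diagonal of the sampled block is the
error term. -/
lemma quadraticForm_sub_measure_add_div_nonneg (hf : IsPosDefFn f) (hfm : Measurable f) {M : ℝ}
    (hM : ∀ x, ‖f x‖ ≤ M) (μ : Measure G) [IsProbabilityMeasure μ] {ι : Type*} [Fintype ι]
    (a : ι → G) (w : ℝ) {m : ℕ} (hm : m ≠ 0) :
    0 ≤ ∑ i, ∑ j, (f (a i - a j)).re - w * ∑ i, ∫ y, (f (a i - y)).re ∂μ
      - w * ∑ i, ∫ y, (f (y - a i)).re ∂μ + w ^ 2 * ∫ x, ∫ y, (f (x - y)).re ∂μ ∂μ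
      + w ^ 2 / m * ((f 0).re - ∫ x, ∫ y, (f (x - y)).re ∂μ ∂μ) := by
  set I := ∫ x, ∫ y, (f (x - y)).re ∂μ ∂μ
  let ν := Measure.pi fun _ : Fin m => μ
  let p : (Fin m → G) → ι ⊕ Fin m → G := fun y => Sum.elim a y
  let c : ι ⊕ Fin m → ℝ := Sum.elim 1 fun _ => -(w / m)
  have hg : Measurable fun z : G × G => (f (z.1 - z.2)).re :=
    Complex.measurable_re.comp (hfm.comp measurable_sub)
  have hgb : ∀ z : G × G, ‖(f (z.1 - z.2)).re‖ ≤ M := fun z => (abs_re_le_norm _).trans (hM _)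
  have hp : ∀ i, Measurable fun y => p y i := by
    rintro (i | k)
    exacts [measurable_const, measurable_pi_apply k]
  have hint : ∀ i j, Integrable (fun y => c i * c j * (f (p y i - p y j)).re) ν := fun i j =>
    (Integrable.of_bound (hg.comp ((hp i).prodMk (hp j))).aestronglyMeasurable M
      (ae_of_all _ fun y => hgb (p y i, p y j))).const_mul _
  have h11 : ∀ i j, ∫ y, (f (p y (.inl i) - p y (.inl j))).re ∂ν = (f (a i - a j)).re := by
    simp [p]
  have h12 : ∀ i k, ∫ y, (f (p y (.inl i) - p y (.inr k))).re ∂ν = ∫ y, (f (a i - y)).re ∂μ :=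
    fun i k => integral_pi_comp_eval μ (hg.comp (measurable_const.prodMk measurable_id)) k
  have h21 : ∀ k i, ∫ y, (f (p y (.inr k) - p y (.inl i))).re ∂ν = ∫ y, (f (y - a i)).re ∂μ :=
    fun k i => integral_pi_comp_eval μ (hg.comp (measurable_id.prodMk measurable_const)) k
  have h22 : ∀ k l, ∫ y, (f (p y (.inr k) - p y (.inr l))).re ∂ν
      = I + if k = l then (f 0).re - I else 0 := by
    intro k l
    rcases eq_or_ne k l with rfl | hkl
    · simp [p]
    · rw [if_neg hkl, add_zero]
      exact integral_pi_comp_eval_pair μ (g := fun x y => (f (x - y)).re) hg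
        (Integrable.of_bound hg.aestronglyMeasurable M (ae_of_all _ hgb)) hkl
  have key : 0 ≤ ∫ y, ∑ i, ∑ j, c i * c j * (f (p y i - p y j)).re ∂ν :=
    integral_nonneg fun y => hf.re_quadraticForm_nonneg (p y) c
  rw [integral_finsetSum _ fun i _ => integrable_finsetSum _ fun j _ => hint i j,
    Finset.sum_congr rfl fun i _ => integral_finsetSum _ fun j _ => hint i j] at key
  simp only [integral_const_mul, Fintype.sum_sum_type, h11, h12, h21, h22, c, Sum.elim_inl,
    Sum.elim_inr, Pi.one_apply, one_mul, mul_one, mul_add,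
    Finset.sum_add_distrib, Finset.sum_ite_eq, Finset.mem_univ, if_true, Finset.sum_const, Finset.card_univ, Fintype.card_fin, nsmul_eq_mul, ← Finset.mul_sum] at key
  have hm' : (m : ℝ) ≠ 0 := Nat.cast_ne_zero.mpr hm
  convert key using 1
  field_simp
  ring

lemma quadraticForm_sub_measure_nonneg (hf : IsPosDefFn f) (hfm : Measurable f) {M : ℝ}
    (hM : ∀ x, ‖f x‖ ≤ M) (μ : Measure G) [IsProbabilityMeasure μ] {ι : Type*} [Fintype ι]
    (a : ι → G) (w : ℝ) :
    0 ≤ ∑ i, ∑ j, (f (a i - a j)).re - w * ∑ i, ∫ y, (f (a i - y)).re ∂μ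
      - w * ∑ i, ∫ y, (f (y - a i)).re ∂μ + w ^ 2 * ∫ x, ∫ y, (f (x - y)).re ∂μ ∂μ := by
  refine ge_of_tendsto ?_ ((eventually_ne_atTop 0).mono fun m hm =>
    hf.quadraticForm_sub_measure_add_div_nonneg hfm hM μ a w hm)
  simpa using ((tendsto_const_div_atTop_nhds_zero_nat (w ^ 2)).mul_const _).const_add _

end IsPosDefFn

section Cube

variable {d : ℕ}

def cube (x : Fin d → ℝ) (R : ℝ) : Set (Fin d → ℝ) :=
  Set.univ.pi fun i => Set.Icc (x i) (x i + R)

lemma measurableSet_cube (x : Fin d → ℝ) (R : ℝ) : MeasurableSet (cube x R) :=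
  MeasurableSet.univ_pi fun _ => measurableSet_Icc

lemma volume_cube (x : Fin d → ℝ) (R : ℝ) : volume (cube x R) = ENNReal.ofReal R ^ d := by
  simp [cube, Set.pi_univ_Icc, Real.volume_Icc_pi]

lemma measureReal_cube (x : Fin d → ℝ) {R : ℝ} (hR : 0 ≤ R) : volume.real (cube x R) = R ^ d := by
  simp [measureReal_def, volume_cube, ENNReal.toReal_ofReal hR]

lemma cube_subset_cube {x : Fin d → ℝ} {R r : ℝ} (hr : 0 ≤ r) :
    cube x R ⊆ cube (fun i => x i - r) (R + 2 * r) :=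
  Set.pi_mono fun _ _ => Set.Icc_subset_Icc (by linarith) (by linarith)

lemma closedBall_subset_cube {x b : Fin d → ℝ} {R r : ℝ} (hr : 0 ≤ r) (hb : b ∈ cube x R) :
    Metric.closedBall b r ⊆ cube (fun i => x i - r) (R + 2 * r) := by
  rw [closedBall_pi b hr]
  refine Set.pi_mono fun i _ => ?_
  rw [Real.closedBall_eq_Icc]
  have := hb i (Set.mem_univ i)
  exact Set.Icc_subset_Icc (by linarith [this.1]) (by linarith [this.2])

end Cube

lemma integral_cond_eq_inv_mul_setIntegral {X : Type*} [MeasurableSpace X] (μ : Measure X)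
    (s : Set X) (g : X → ℝ) :
    ∫ x, g x ∂(ProbabilityTheory.cond μ s) = (μ.real s)⁻¹ * ∫ x in s, g x ∂μ := by
  rw [ProbabilityTheory.cond, integral_smul_measure, ENNReal.toReal_inv, smul_eq_mul]
  rfl

lemma setIntegral_le_of_eqOn_of_le {X : Type*} [MeasurableSpace X] {μ : Measure X}
    {s t : Set X} {g : X → ℝ} {c M : ℝ} (hts : t ⊆ s) (hs : MeasurableSet s)
    (ht : MeasurableSet t) (hμs : μ s ≠ ∞) (hg : IntegrableOn g s μ)
    (hgt : Set.EqOn g (fun _ => c) t) (hgs : ∀ x ∈ s, g x ≤ M) :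
    ∫ x in s, g x ∂μ ≤ μ.real t * c + (μ.real s - μ.real t) * M := by
  rw [← integral_inter_add_sdiff ht hg, Set.inter_eq_self_of_subset_right hts,
    setIntegral_congr_fun ht hgt, setIntegral_const, smul_eq_mul,
    ← measureReal_sdiff hts ht hμs]
  gcongr
  calc ∫ x in s \ t, g x ∂μ ≤ ∫ _ in s \ t, M ∂μ :=
        setIntegral_mono_on (hg.mono_set Set.sdiff_subset)
          (integrableOn_const (measure_ne_top_of_subset Set.sdiff_subset hμs)) (hs.diff ht)
          fun x hx => hgs x hx.1
    _ = μ.real (s \ t) * M := by rw [setIntegral_const, smul_eq_mul]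

section Translate

variable {E : Type*} [NormedAddCommGroup E] [MeasurableSpace E] [MeasurableAdd E]
  {μ : Measure E} {g : E → ℝ} {r : ℝ} {s : Set E} {b : E}

lemma setIntegral_comp_sub_left_eq_integral [MeasurableNeg E] [μ.IsNegInvariant]
    [μ.IsAddLeftInvariant] (hg : Function.support g ⊆ Metric.closedBall 0 r)
    (hs : Metric.closedBall b r ⊆ s) : ∫ y in s, g (b - y) ∂μ = ∫ y, g y ∂μ := by
  rw [setIntegral_eq_integral_of_forall_compl_eq_zero fun y hy => ?_, integral_sub_left_eq_self]
  refine Function.notMem_support.mp fun h => hy (hs ?_)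
  simpa [dist_eq_norm, norm_sub_rev] using hg h

lemma setIntegral_comp_sub_right_eq_integral [μ.IsAddRightInvariant]
    (hg : Function.support g ⊆ Metric.closedBall 0 r)
    (hs : Metric.closedBall b r ⊆ s) : ∫ y in s, g (y - b) ∂μ = ∫ y, g y ∂μ := by
  rw [setIntegral_eq_integral_of_forall_compl_eq_zero fun y hy => ?_, integral_sub_right_eq_self]
  refine Function.notMem_support.mp fun h => hy (hs ?_)
  simpa [dist_eq_norm] using hg h

lemma setIntegral_re_comp_sub_left_le_integral_norm [MeasurableNeg E] [μ.IsNegInvariant]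
    [μ.IsAddLeftInvariant] {f : E → ℂ} (hf : Integrable f μ) (x : E) (s : Set E) :
    ∫ y in s, (f (x - y)).re ∂μ ≤ ∫ y, ‖f y‖ ∂μ := by
  have hfx : Integrable (fun y => f (x - y)) μ := hf.comp_sub_left x
  calc ∫ y in s, (f (x - y)).re ∂μ ≤ ∫ y in s, ‖f (x - y)‖ ∂μ :=
        setIntegral_mono hfx.re.integrableOn hfx.norm.integrableOn fun y => re_le_norm _
    _ ≤ ∫ y, ‖f (x - y)‖ ∂μ :=
        setIntegral_le_integral hfx.norm (ae_of_all _ fun y => norm_nonneg _)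
    _ = ∫ y, ‖f y‖ ∂μ := integral_sub_left_eq_self (fun y => ‖f y‖) μ x

end Translate

lemma sum_sum_re_apply_sub_eq_card_mul {G : Type*} [AddCommGroup G] {f : G → ℂ} (F : Finset G)
    (hF : ∀ a ∈ F, ∀ b ∈ F, a ≠ b → f (a - b) = 0) :
    ∑ a : F, ∑ b : F, (f (a - b)).re = F.card * (f 0).re := by
  have hrow : ∀ a : F, ∑ b : F, (f (a - b)).re = (f 0).re := fun a => by
    rw [Finset.sum_eq_single a (fun b _ hba => ?_) (by simp), sub_self]
    rw [hF a a.2 b b.2 fun h => hba (Subtype.ext h).symm, zero_re]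
  rw [Finset.sum_congr rfl fun a _ => hrow a, Finset.sum_const, Finset.card_univ,
    Fintype.card_coe, nsmul_eq_mul]

lemma mul_le_add_div_of_quadratic_nonneg {K t P J E a : ℝ} (ht : 0 < t) (hP : 0 < P)
    (htP : t * P ≤ K) (hJ : 0 ≤ J) (hE : 0 ≤ E)
    (h : 0 ≤ K * a - 2 * t * K * J + t ^ 2 * (P * J + E)) : t * J ≤ a + t * E / P := by
  have hKD : K * (t * J - a) ≤ t * (t * E) := by
    nlinarith [mul_le_mul_of_nonneg_right htP (mul_nonneg ht.le hJ)]
  rw [← sub_le_iff_le_add', le_div_iff₀ hP]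
  rcases le_total (t * J - a) 0 with hD | hD
  · nlinarith
  · refine le_of_mul_le_mul_left ?_ ht
    nlinarith [mul_le_mul_of_nonneg_right htP hD]

section Packing

open ProbabilityTheory

variable {d : ℕ} {f : (Fin d → ℝ) → ℂ} {r R : ℝ}

lemma integral_integral_re_cond_cube_le (hfc : Continuous f) (hfi : Integrable f) {M : ℝ}
    (hM : ∀ y, ‖f y‖ ≤ M) (hr : 0 ≤ r) (hsupp : tsupport f ⊆ Metric.closedBall 0 r)
    (x : Fin d → ℝ) (hR : 0 ≤ R) :
    ∫ z, ∫ y, (f (z - y)).re ∂volume[|cube (fun i => x i - r) (R + 2 * r)]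
        ∂volume[|cube (fun i => x i - r) (R + 2 * r)] ≤
      ((R + 2 * r) ^ d)⁻¹ * (((R + 2 * r) ^ d)⁻¹ *
        (R ^ d * (∫ y, (f y).re) + ((R + 2 * r) ^ d - R ^ d) * ∫ y, ‖f y‖)) := by
  set C := cube (fun i => x i - r) (R + 2 * r)
  have hCtop : volume C ≠ ∞ := by simp [C, volume_cube]
  have := isFiniteMeasure_restrict.mpr hCtop
  have hint : Integrable (fun p : (Fin d → ℝ) × (Fin d → ℝ) => (f (p.1 - p.2)).re)
      ((volume.restrict C).prod (volume.restrict C)) :=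
    Integrable.of_bound (continuous_re.comp (hfc.comp continuous_sub)).aestronglyMeasurable M
      (ae_of_all _ fun p => (abs_re_le_norm _).trans (hM _))
  have hg : Function.support (fun y => (f y).re) ⊆ Metric.closedBall 0 r :=
    (Function.support_comp_subset zero_re f).trans ((subset_tsupport f).trans hsupp)
  have hbound := setIntegral_le_of_eqOn_of_le (cube_subset_cube hr) (measurableSet_cube _ _)
    (measurableSet_cube _ _) hCtop hint.integral_prod_left
    (fun b hb => setIntegral_comp_sub_left_eq_integral hg (closedBall_subset_cube hr hb))
    (fun z _ => setIntegral_re_comp_sub_left_le_integral_norm hfi z C)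
  have hV : volume.real C = (R + 2 * r) ^ d := measureReal_cube _ (by positivity)
  rw [measureReal_cube x hR, hV] at hbound
  simp_rw [integral_cond_eq_inv_mul_setIntegral, hV, integral_const_mul]
  gcongr

lemma IsPosDefFn.mul_integral_re_le_of_finset_subset_cube (hf : IsPosDefFn f)
    (hfc : Continuous f) (hfi : Integrable f) {M : ℝ} (hM : ∀ y, ‖f y‖ ≤ M) (hr : 0 ≤ r)
    (hsupp : tsupport f ⊆ Metric.closedBall 0 r) (hJ : 0 ≤ ∫ y, (f y).re)
    {x : Fin d → ℝ} {t : ℝ} (hR : 0 < R) (ht : 0 < t) (F : Finset (Fin d → ℝ))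
    (hFQ : ↑F ⊆ cube x R) (hFdiag : ∀ a ∈ F, ∀ b ∈ F, a ≠ b → f (a - b) = 0)
    (htF : t * R ^ d ≤ F.card) :
    t * ∫ y, (f y).re ≤
      (f 0).re + t * (((R + 2 * r) ^ d - R ^ d) / R ^ d) * ∫ y, ‖f y‖ := by
  set J := ∫ y, (f y).re
  set I := ∫ y, ‖f y‖
  set C := cube (fun i => x i - r) (R + 2 * r)
  set V := (R + 2 * r) ^ d
  have hV : volume.real C = V := measureReal_cube _ (by positivity)
  have hVpos : 0 < V := by positivity
  have hCtop : volume C ≠ ∞ := by simp [C, volume_cube]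
  have hC0 : volume C ≠ 0 := fun h =>
    hVpos.ne' (by rw [← hV, measureReal_def, h, ENNReal.toReal_zero])
  have := cond_isProbabilityMeasure_of_finite hC0 hCtop
  have hg : Function.support (fun y => (f y).re) ⊆ Metric.closedBall 0 r :=
    (Function.support_comp_subset zero_re f).trans ((subset_tsupport f).trans hsupp)
  have hB1 : ∀ b ∈ cube x R, ∫ y, (f (b - y)).re ∂volume[|C] = V⁻¹ * J := fun b hb => by
    rw [integral_cond_eq_inv_mul_setIntegral, hV,
      setIntegral_comp_sub_left_eq_integral hg (closedBall_subset_cube hr hb)]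
  have hB2 : ∀ b ∈ cube x R, ∫ y, (f (y - b)).re ∂volume[|C] = V⁻¹ * J := fun b hb => by
    rw [integral_cond_eq_inv_mul_setIntegral, hV,
      setIntegral_comp_sub_right_eq_integral hg (closedBall_subset_cube hr hb)]
  have key := hf.quadraticForm_sub_measure_nonneg hfc.measurable hM volume[|C]
    (fun a : F => (a : Fin d → ℝ)) (t * V)
  simp only [sum_sum_re_apply_sub_eq_card_mul F hFdiag, fun a : F => hB1 a (hFQ a.2),
    fun a : F => hB2 a (hFQ a.2), Finset.sum_const, Finset.card_univ, Fintype.card_coe,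
    nsmul_eq_mul] at key
  have hA : (t * V) ^ 2 * ∫ z, ∫ y, (f (z - y)).re ∂volume[|C] ∂volume[|C] ≤
      (t * V) ^ 2 * (V⁻¹ * (V⁻¹ * (R ^ d * J + (V - R ^ d) * I))) :=
    mul_le_mul_of_nonneg_left (integral_integral_re_cond_cube_le hfc hfi hM hr hsupp x hR.le)
      (sq_nonneg _)
  have hRV : R ^ d ≤ V := pow_le_pow_left₀ hR.le (by linarith) d
  have hI : 0 ≤ I := integral_nonneg fun y => norm_nonneg _
  rw [mul_div_assoc', div_mul_eq_mul_div, mul_assoc]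
  refine mul_le_add_div_of_quadratic_nonneg ht (by positivity) htF hJ
    (mul_nonneg (sub_nonneg.2 hRV) hI) ?_
  have e1 : t * V * (F.card * (V⁻¹ * J)) = t * F.card * J := by field_simp
  have e2 : (t * V) ^ 2 * (V⁻¹ * (V⁻¹ * (R ^ d * J + (V - R ^ d) * I)))
      = t ^ 2 * (R ^ d * J + (V - R ^ d) * I) := by field_simp
  linarith

end Packing

lemma apply_sub_eq_zero_of_inter_sub_subset {G M : Type*} [AddCommGroup G] [Zero M]
    {f : G → M} {Λ Ω : Set G} (hΛΩ : Ω ∩ (Λ - Λ) ⊆ {0}) (hf : Function.support f ⊆ Ω)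
    {a b : G} (ha : a ∈ Λ) (hb : b ∈ Λ) (hab : a ≠ b) : f (a - b) = 0 :=
  Function.notMem_support.mp fun h =>
    hab (sub_eq_zero.mp (hΛΩ ⟨hf h, Set.sub_mem_sub ha hb⟩))

lemma tendsto_add_pow_sub_pow_div_pow_atTop (c : ℝ) (d : ℕ) :
    Tendsto (fun R : ℝ => ((R + c) ^ d - R ^ d) / R ^ d) atTop (𝓝 0) := by
  have h : Tendsto (fun R : ℝ => (1 + c / R) ^ d - 1) atTop (𝓝 0) := by
    have h1 : Tendsto (fun R : ℝ => 1 + c / R) atTop (𝓝 1) := by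
      simpa using ((tendsto_const_nhds (x := c)).div_atTop (tendsto_id (α := ℝ))).const_add 1
    simpa using (h1.pow d).sub_const 1
  refine h.congr' ?_
  filter_upwards [eventually_gt_atTop 0] with R hR
  rw [sub_div, div_self (pow_pos hR d).ne', ← div_pow, add_div, div_self hR.ne']

theorem turan_bound_from_packing_Rd_general
    {d : ℕ} (Λ : Set (Fin d → ℝ)) (ρ : ℝ) (hρ : 0 < ρ)
    (hdens : ∀ ε : ℝ, 0 < ε → ε < ρ → ∀ R₀ : ℝ, 0 < R₀ →
      ∃ R : ℝ, R₀ ≤ R ∧ ∃ x : Fin d → ℝ, ∃ F : Finset (Fin d → ℝ),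
        (F : Set (Fin d → ℝ)) ⊆ Λ ∩ Set.univ.pi (fun i => Set.Icc (x i) (x i + R)) ∧
        (ρ - ε) * R ^ d ≤ (F.card : ℝ))
    (Ω : Set (Fin d → ℝ))
    (hΛΩ : Ω ∩ (Λ - Λ) ⊆ {0})
    (f : (Fin d → ℝ) → ℂ) (hf_cont : Continuous f) (hf_int : Integrable f volume)
    (hf_pd : IsPosDefFn f)
    (hf_cpt : IsCompact (tsupport f)) (hf_supp : tsupport f ⊆ Ω) :
    (∫ x, f x).re ≤ (1 / ρ) * (f 0).re := by
  obtain ⟨r, hr, hsupp⟩ := hf_cpt.isBounded.subset_closedBall_lt 0 0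
  obtain ⟨M, hM⟩ := HasCompactSupport.exists_bound_of_continuous hf_cpt hf_cont
  rw [show (∫ x, f x).re = ∫ x, (f x).re from (integral_re hf_int).symm, one_div_mul_eq_div,
    le_div_iff₀' hρ]
  rcases le_total (∫ x, (f x).re) 0 with hJ | hJ
  · nlinarith [hf_pd.re_apply_zero_nonneg]
  have hlim : Tendsto (fun ε => (ρ - ε) * ∫ x, (f x).re) (𝓝[>] 0) (𝓝 (ρ * ∫ x, (f x).re)) := by
    refine (((continuous_const.sub continuous_id).mul continuous_const).tendsto' 0 _ ?_).mono_left
      nhdsWithin_le_nhds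
    simp
  refine le_of_tendsto hlim ?_
  filter_upwards [Ioo_mem_nhdsGT hρ] with ε ⟨hε, hερ⟩
  refine le_of_tendsto_of_tendsto_of_frequently tendsto_const_nhds
    (by simpa using (((tendsto_add_pow_sub_pow_div_pow_atTop (2 * r) d).const_mul (ρ - ε)).mul_const
      (∫ x, ‖f x‖)).const_add (f 0).re) (frequently_atTop.mpr fun R₀ => ?_)
  obtain ⟨R, hR, x, F, hF, hcard⟩ := hdens ε hε hερ (max R₀ 1) (by positivity)
  refine ⟨R, le_of_max_le_left hR, hf_pd.mul_integral_re_le_of_finset_subset_cube hf_cont hf_int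
    hM hr.le hsupp hJ (by linarith [le_of_max_le_right hR]) (by linarith) F
    (fun a ha => (hF ha).2) (fun a ha b hb => apply_sub_eq_zero_of_inter_sub_subset hΛΩ
      ((subset_tsupport f).trans hf_supp) (hF ha).1 (hF hb).1) hcard⟩

theorem turan_bound_from_packing_Rd
    {d : ℕ} (Λ : Set (Fin d → ℝ)) (ρ : ℝ) (hρ : 0 < ρ)
    (hdens : ∀ ε : ℝ, 0 < ε → ε < ρ → ∀ R₀ : ℝ, 0 < R₀ →
      ∃ R : ℝ, R₀ ≤ R ∧ ∃ x : Fin d → ℝ, ∃ F : Finset (Fin d → ℝ),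
        (F : Set (Fin d → ℝ)) ⊆ Λ ∩ Set.univ.pi (fun i => Set.Icc (x i) (x i + R)) ∧
        (ρ - ε) * R ^ d ≤ (F.card : ℝ))
    (Ω : Set (Fin d → ℝ)) (hΩopen : IsOpen Ω) (hΩsym : Ω = -Ω)
    (hΛΩ : Ω ∩ (Λ - Λ) ⊆ {0})
    (f : (Fin d → ℝ) → ℂ) (hf_cont : Continuous f) (hf_int : Integrable f volume)
    (hf_pd : IsPosDefFn f)
    (hf_cpt : IsCompact (tsupport f)) (hf_supp : tsupport f ⊆ Ω) :
    (∫ x, f x).re ≤ (1 / ρ) * (f 0).re :=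
  turan_bound_from_packing_Rd_general Λ ρ hρ hdens Ω hΛΩ f hf_cont hf_int hf_pd hf_cpt hf_supp
end

section
/- Let G be a finite abelian group, let H ⊆ G be nonempty, let T be a set of characters of G that is a spectrum of H, and let Ω ⊆ H − H. Then every positive definite function f : G → ℂ with f(x) = 0 for all x ∉ Ω satisfies Re(∑_{x ∈ G} f(x)) ≤ #H · f(0). -/
/-!
Fix `t₀ ∈ T`. Positive definiteness makes every Fourier coefficient `∑ₓ f x ψ x`
nonnegative, in particular those of the characters `t t₀⁻¹`, `t ∈ T`. Summed over `T` they
give `∑ₓ f x t₀(-x) ∑_{t ∈ T} t x`, and the inner sum vanishes on `(H - H) \ {0}` by column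
orthogonality of the square matrix `(t h)_{t ∈ T, h ∈ H}`, so the total is `#H f 0`. The
coefficient at `t = t₀` is `∑ₓ f x`, which is therefore at most `#H f 0`.
-/

open Complex
open scoped ComplexOrder Pointwise BigOperators

theorem Matrix.mul_eq_smul_one_comm_of_card_eq {m n K : Type*} [Fintype m] [DecidableEq m]
    [Fintype n] [DecidableEq n] [Field K] {A : Matrix m n K} {B : Matrix n m K} {c : K}
    (hc : c ≠ 0) (hcard : Fintype.card m = Fintype.card n) (h : A * B = c • 1) :
    B * A = c • 1 := by
  have hAB : A * (c⁻¹ • B) = 1 := by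
    rw [Matrix.mul_smul, h, smul_smul, inv_mul_cancel₀ hc, one_smul]
  have hBA := (Matrix.mul_eq_one_comm_of_card_eq m n K hcard).mp hAB
  rw [Matrix.smul_mul] at hBA
  rw [← hBA, smul_smul, mul_inv_cancel₀ hc, one_smul]

section Spectrum

variable {G : Type*} [AddCommGroup G] [Fintype G] {H : Finset G} {T : Finset (AddChar G ℂ)}

/-- A square matrix with orthogonal rows of equal length also has orthogonal columns. -/
theorem sum_conj_mul_eq_zero_of_spectrum (hcard : T.card = H.card)
    (horth : ∀ s ∈ T, ∀ t ∈ T, s ≠ t → ∑ x ∈ H, s x * (starRingEnd ℂ) (t x) = 0)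
    {a b : G} (ha : a ∈ H) (hb : b ∈ H) (hab : a ≠ b) :
    ∑ t ∈ T, (starRingEnd ℂ) (t a) * t b = 0 := by
  classical
  let A : Matrix T H ℂ := Matrix.of fun t x => (t : AddChar G ℂ) x
  have hrows : A * A.conjTranspose = (H.card : ℂ) • 1 := by
    ext s t
    simp only [A, Matrix.mul_apply, Matrix.conjTranspose_apply, Matrix.of_apply,
      Matrix.smul_apply, Matrix.one_apply, smul_eq_mul, Complex.star_def]
    rw [Finset.sum_coe_sort H
      fun x => (s : AddChar G ℂ) x * (starRingEnd ℂ) ((t : AddChar G ℂ) x)]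
    split_ifs with hst
    · subst hst
      simp [Complex.mul_conj, Complex.normSq_eq_norm_sq, AddChar.norm_apply]
    · rw [mul_zero]
      exact horth _ s.2 _ t.2 (fun h => hst (Subtype.ext h))
  have hcols := Matrix.mul_eq_smul_one_comm_of_card_eq
    (by exact_mod_cast (Finset.card_pos.mpr ⟨a, ha⟩).ne') (by simpa using hcard) hrows
  have := congrFun (congrFun hcols ⟨a, ha⟩) ⟨b, hb⟩
  simp only [A, Matrix.mul_apply, Matrix.conjTranspose_apply, Matrix.of_apply,
      Matrix.smul_apply, Matrix.one_apply, smul_eq_mul, Complex.star_def] at this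
  rw [← Finset.sum_coe_sort T, this, if_neg (fun h => hab (congrArg Subtype.val h)), mul_zero]

theorem sum_apply_eq_zero_of_mem_sub_of_spectrum (hcard : T.card = H.card)
    (horth : ∀ s ∈ T, ∀ t ∈ T, s ≠ t → ∑ x ∈ H, s x * (starRingEnd ℂ) (t x) = 0)
    {x : G} (hx : x ∈ (H : Set G) - H) (hx0 : x ≠ 0) :
    ∑ t ∈ T, t x = 0 := by
  obtain ⟨a, ha, b, hb, rfl⟩ := Set.mem_sub.mp hx
  have hsum := sum_conj_mul_eq_zero_of_spectrum hcard horth ha hb (sub_ne_zero.mp hx0)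
  rw [← map_zero (starRingEnd ℂ), ← hsum, map_sum]
  refine Finset.sum_congr rfl fun t _ => ?_
  rw [sub_eq_add_neg, AddChar.map_add_eq_mul, AddChar.map_neg_eq_conj, map_mul,
    Complex.conj_conj]

theorem sum_sum_mul_mul_inv_eq_card_mul_of_spectrum (hcard : T.card = H.card)
    (horth : ∀ s ∈ T, ∀ t ∈ T, s ≠ t → ∑ x ∈ H, s x * (starRingEnd ℂ) (t x) = 0)
    {f : G → ℂ} (hf : ∀ x, x ∉ (H : Set G) - H → f x = 0) (t₀ : AddChar G ℂ) :
    ∑ t ∈ T, ∑ x, f x * (t * t₀⁻¹) x = H.card * f 0 := by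
  simp only [AddChar.mul_apply, Finset.sum_comm (s := T), ← Finset.mul_sum, ← Finset.sum_mul]
  rw [Fintype.sum_eq_single 0 fun x hx0 => ?_]
  · simp [hcard, mul_comm]
  · by_cases hx : x ∈ (H : Set G) - H
    · rw [sum_apply_eq_zero_of_mem_sub_of_spectrum hcard horth hx hx0, zero_mul, mul_zero]
    · rw [hf x hx, zero_mul]

end Spectrum

namespace IsPosDefFn

variable {G : Type*} [AddCommGroup G] [Fintype G] {f : G → ℂ}

theorem sum_sum_nonneg (hf : IsPosDefFn f) (c : G → ℂ) :
    0 ≤ ∑ x, ∑ y, c x * (starRingEnd ℂ) (c y) * f (x - y) := by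
  let e := (Fintype.equivFin G).symm
  have := hf _ e (c ∘ e)
  convert this using 1
  rw [← e.sum_comp]
  exact Finset.sum_congr rfl fun i _ => (e.sum_comp _).symm

theorem sum_mul_addChar_nonneg (hf : IsPosDefFn f) (ψ : AddChar G ℂ) :
    0 ≤ ∑ x, f x * ψ x := by
  have h := hf.sum_sum_nonneg ψ
  have hdiff : ∀ x y, ψ x * (starRingEnd ℂ) (ψ y) * f (x - y) = f (x - y) * ψ (x - y) := by
    intro x y
    rw [← AddChar.map_neg_eq_conj, ← AddChar.map_add_eq_mul, ← sub_eq_add_neg, mul_comm]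
  have hshift : ∀ x, ∑ y, f (x - y) * ψ (x - y) = ∑ u, f u * ψ u :=
    fun x => Equiv.sum_comp (Equiv.subLeft x) (fun u => f u * ψ u)
  simp only [hdiff, hshift, Finset.sum_const, Finset.card_univ, nsmul_eq_mul] at h
  have hcard : (0 : ℂ) < Fintype.card G := by exact_mod_cast Fintype.card_pos
  exact le_of_mul_le_mul_left (by rwa [mul_zero]) hcard

end IsPosDefFn

theorem turan_bound_from_spectrum_general
    {G : Type*} [AddCommGroup G] [Fintype G]
    (H : Finset G) (hH : H.Nonempty)
    (T : Finset (AddChar G ℂ))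
    (hT_card : T.card = H.card)
    (hT_orth : ∀ s ∈ T, ∀ t ∈ T, s ≠ t →
      ∑ x ∈ H, s x * (starRingEnd ℂ) (t x) = 0)
    (Ω : Set G) (hΩ : Ω ⊆ (H : Set G) - (H : Set G))
    (f : G → ℂ) (hf_pd : IsPosDefFn f)
    (hf_supp : ∀ x : G, x ∉ Ω → f x = 0) :
    (∑ x : G, f x).re ≤ (H.card : ℝ) * (f 0).re := by
  obtain ⟨t₀, ht₀⟩ : T.Nonempty := Finset.card_pos.mp (hT_card ▸ Finset.card_pos.mpr hH)
  have hsupp : ∀ x, x ∉ (H : Set G) - H → f x = 0 := fun x hx => hf_supp x fun h => hx (hΩ h)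
  have hle : ∑ x, f x ≤ (H.card : ℂ) * f 0 :=
    calc ∑ x, f x = ∑ x, f x * (t₀ * t₀⁻¹) x := by simp
      _ ≤ ∑ t ∈ T, ∑ x, f x * (t * t₀⁻¹) x :=
        Finset.single_le_sum (fun t _ => hf_pd.sum_mul_addChar_nonneg (t * t₀⁻¹)) ht₀
      _ = H.card * f 0 := sum_sum_mul_mul_inv_eq_card_mul_of_spectrum hT_card hT_orth hsupp t₀
  simpa using (Complex.le_def.mp hle).1

theorem turan_bound_from_spectrum
    {G : Type*} [AddCommGroup G] [Fintype G] [DecidableEq G]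
    (H : Finset G) (hH : H.Nonempty)
    (T : Finset (AddChar G ℂ))
    (hT_unit : ∀ t ∈ T, ∀ x : G, ‖t x‖ = 1)
    (hT_card : T.card = H.card)
    (hT_orth : ∀ s ∈ T, ∀ t ∈ T, s ≠ t →
      ∑ x ∈ H, s x * (starRingEnd ℂ) (t x) = 0)
    (Ω : Set G) (hΩ : Ω ⊆ (H : Set G) - (H : Set G))
    (f : G → ℂ) (hf_pd : IsPosDefFn f)
    (hf_supp : ∀ x : G, x ∉ Ω → f x = 0) :
    (∑ x : G, f x).re ≤ (H.card : ℝ) * (f 0).re :=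
  turan_bound_from_spectrum_general H hH T hT_card hT_orth Ω hΩ f hf_pd hf_supp
end

section
/- Let G be a locally compact abelian group with Haar measure μ, let φ : G → G be a topological group automorphism (a group automorphism that is a homeomorphism), and suppose c > 0 is such that μ(φ(A)) = c · μ(A) for every measurable set A ⊆ G. Then for every 0-symmetric open set Ω ⊆ G, the Turán constants satisfy T_G(φ(Ω)) = c · T_G(Ω). (When μ(Ω) is finite and positive, c = μ(φ(Ω))/μ(Ω).) -/
open MeasureTheory Complex
open scoped ENNReal ComplexOrder

/-- The Turán constant of a set `Ω`: the supremum in `[0,∞]` of `Re (∫ f dμ) / f 0` over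
nonzero continuous positive definite functions with support a compact subset of `Ω`. -/
noncomputable def turanConst {G : Type*} [AddCommGroup G] [TopologicalSpace G]
    [MeasurableSpace G] (μ : Measure G) (Ω : Set G) : ℝ≥0∞ :=
  sSup {r : ℝ≥0∞ | ∃ f : G → ℂ, Continuous f ∧ IsPosDefFn f ∧ f ≠ 0 ∧
    IsCompact (tsupport f) ∧ tsupport f ⊆ Ω ∧
    r = ENNReal.ofReal ((∫ x, f x ∂μ).re / (f 0).re)}

/-!
Composition with `φ⁻¹` is a bijection from the admissible functions for `Ω` onto those for
`φ(Ω)`: it preserves continuity, positive definiteness, compactness of the support and the value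
at `0`, and since the scaling hypothesis says `φ⁻¹` pushes `μ` forward to `c • μ`, it multiplies
every integral by `c`. Hence the two suprema differ by the factor `c`.
-/

lemma IsPosDefFn.comp_addMonoidHom {G H : Type*} [AddCommGroup G] [AddCommGroup H]
    {f : H → ℂ} (hf : IsPosDefFn f) (ψ : G →+ H) : IsPosDefFn (f ∘ ψ) := fun N x c => by
  simpa only [Function.comp_apply, map_sub] using hf N (ψ ∘ x) c

lemma isPosDefFn_comp_addEquiv_iff {G H : Type*} [AddCommGroup G] [AddCommGroup H]
    {f : H → ℂ} (e : G ≃+ H) : IsPosDefFn (f ∘ e) ↔ IsPosDefFn f :=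
  ⟨fun h => by simpa [Function.comp_def] using h.comp_addMonoidHom e.symm.toAddMonoidHom,
    fun h => h.comp_addMonoidHom e.toAddMonoidHom⟩

lemma MeasurableEquiv.map_symm_eq_smul_of_measure_image {α β : Type*} [MeasurableSpace α]
    [MeasurableSpace β] {μ : Measure α} {ν : Measure β} (e : α ≃ᵐ β) {a : ℝ≥0∞}
    (h : ∀ A, MeasurableSet A → ν (e '' A) = a * μ A) : ν.map e.symm = a • μ := by
  ext A hA
  rw [e.symm.map_apply, ← e.image_eq_preimage_symm, h A hA, Measure.smul_apply, smul_eq_mul]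

section Transport

variable {G H : Type*} [AddCommGroup G] [AddCommGroup H] [TopologicalSpace G] [TopologicalSpace H]

def IsTuranAdmissible (Ω : Set G) (f : G → ℂ) : Prop :=
  Continuous f ∧ IsPosDefFn f ∧ f ≠ 0 ∧ IsCompact (tsupport f) ∧ tsupport f ⊆ Ω

noncomputable def turanRatio [MeasurableSpace G] (μ : Measure G) (f : G → ℂ) : ℝ≥0∞ :=
  ENNReal.ofReal ((∫ x, f x ∂μ).re / (f 0).re)

lemma turanConst_eq_sSup_image [MeasurableSpace G] (μ : Measure G) (Ω : Set G) :
    turanConst μ Ω = sSup (turanRatio μ '' {f | IsTuranAdmissible Ω f}) := by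
  simp only [turanConst, turanRatio, IsTuranAdmissible, Set.image, Set.mem_ofPred_eq, and_assoc,
    eq_comm]

lemma isTuranAdmissible_image_iff (e : G ≃ₜ+ H) {Ω : Set G} {g : H → ℂ} :
    IsTuranAdmissible (e '' Ω) g ↔ IsTuranAdmissible Ω (g ∘ e) := by
  have hcont : Continuous (g ∘ e) ↔ Continuous g := (e : G ≃ₜ H).comp_continuous_iff'
  have hsupp : tsupport (g ∘ e) = e ⁻¹' tsupport g := tsupport_comp_eq_preimage g (e : G ≃ₜ H)
  have hcpt : IsCompact (e ⁻¹' tsupport g) ↔ IsCompact (tsupport g) :=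
    (e : G ≃ₜ H).isCompact_preimage
  have hne : g ∘ e ≠ 0 ↔ g ≠ 0 := (EquivLike.surjective e).injective_comp_right.ne_iff' rfl
  have hsub : e ⁻¹' tsupport g ⊆ Ω ↔ tsupport g ⊆ e '' Ω := by
    conv_lhs => rw [← Set.preimage_image_eq Ω (EquivLike.injective e)]
    exact (EquivLike.surjective e).preimage_subset_preimage_iff
  have hpd : IsPosDefFn (g ∘ e) ↔ IsPosDefFn g := isPosDefFn_comp_addEquiv_iff e.toAddEquiv
  rw [IsTuranAdmissible, IsTuranAdmissible, hcont, hpd, hsupp, hcpt, hne, hsub]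

lemma setOf_isTuranAdmissible_image (e : G ≃ₜ+ H) (Ω : Set G) :
    {g | IsTuranAdmissible (e '' Ω) g} = (· ∘ e.symm) '' {f | IsTuranAdmissible Ω f} := by
  ext g
  simp only [Set.mem_ofPred_eq, Set.mem_image, isTuranAdmissible_image_iff]
  refine ⟨fun hg => ⟨g ∘ e, hg, by ext; simp⟩, ?_⟩
  rintro ⟨f, hf, rfl⟩
  simpa [Function.comp_def] using hf

variable [MeasurableSpace G] [BorelSpace G] [MeasurableSpace H] [BorelSpace H]

lemma turanRatio_comp_symm {μ : Measure G} {ν : Measure H} (e : G ≃ₜ+ H) {a : ℝ≥0∞} (ha : a ≠ ⊤)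
    (h : ∀ A, MeasurableSet A → ν (e '' A) = a * μ A) (f : G → ℂ) :
    turanRatio ν (f ∘ e.symm) = a * turanRatio μ f := by
  have hmap : ν.map e.symm = a • μ :=
    (e : G ≃ₜ H).toMeasurableEquiv.map_symm_eq_smul_of_measure_image h
  have hint : ∫ y, (f ∘ e.symm) y ∂ν = a.toReal • ∫ x, f x ∂μ := by
    rw [← integral_smul_measure, ← hmap]
    exact (integral_map_equiv (e : G ≃ₜ H).toMeasurableEquiv.symm f).symm
  have h0 : (f ∘ e.symm) 0 = f 0 := congrArg f (map_zero e.symm)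
  rw [turanRatio, turanRatio, hint, h0, Complex.real_smul, Complex.re_ofReal_mul, mul_div_assoc,
    ENNReal.ofReal_mul ENNReal.toReal_nonneg, ENNReal.ofReal_toReal ha]

lemma turanConst_image {μ : Measure G} {ν : Measure H} (e : G ≃ₜ+ H) {a : ℝ≥0∞} (ha : a ≠ ⊤)
    (h : ∀ A, MeasurableSet A → ν (e '' A) = a * μ A) (Ω : Set G) :
    turanConst ν (e '' Ω) = a * turanConst μ Ω := by
  rw [turanConst_eq_sSup_image, turanConst_eq_sSup_image, setOf_isTuranAdmissible_image,
    Set.image_image]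
  simp_rw [turanRatio_comp_symm e ha h]
  rw [← Set.image_image (a * ·), sSup_image, ENNReal.mul_sSup]

end Transport

theorem turanConst_automorphism_general
    {G : Type*} [AddCommGroup G] [TopologicalSpace G]
    [MeasurableSpace G] [BorelSpace G]
    (μ : Measure G)
    (φ : G ≃+ G) (hφ : Continuous φ) (hφ_symm : Continuous φ.symm)
    (c : ℝ)
    (hscale : ∀ A : Set G, MeasurableSet A → μ (φ '' A) = ENNReal.ofReal c * μ A)
    (Ω : Set G) :
    turanConst μ (φ '' Ω) = ENNReal.ofReal c * turanConst μ Ω :=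
  turanConst_image ⟨φ, hφ, hφ_symm⟩ ENNReal.ofReal_ne_top hscale Ω

theorem turanConst_automorphism
    {G : Type*} [AddCommGroup G] [TopologicalSpace G] [IsTopologicalAddGroup G]
    [LocallyCompactSpace G] [T2Space G] [MeasurableSpace G] [BorelSpace G]
    (μ : Measure G) [μ.IsAddHaarMeasure]
    (φ : G ≃+ G) (hφ : Continuous φ) (hφ_symm : Continuous φ.symm)
    (c : ℝ) (hc : 0 < c)
    (hscale : ∀ A : Set G, MeasurableSet A → μ (φ '' A) = ENNReal.ofReal c * μ A)
    (Ω : Set G) (hΩopen : IsOpen Ω) (hΩsym : Ω = -Ω) :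
    turanConst μ (φ '' Ω) = ENNReal.ofReal c * turanConst μ Ω :=
  turanConst_automorphism_general μ φ hφ hφ_symm c hscale Ω
end

section
/- Suppose 0 < b < a ≤ 2b and let Ω = (−a, −b) ∪ (−b, b) ∪ (b, a) ⊆ ℝ (that is, the interval (−a, a) with the two points ±b removed). Then the Turán constant satisfies T_ℝ(Ω) = b; that is, the supremum of Re(∫_ℝ f(x) dx)/f(0) over all nonzero continuous positive definite functions f : ℝ → ℂ whose support is a compact subset of Ω equals b (the same value as for the interval (−b, b)). -/
open MeasureTheory Complex
open scoped ENNReal ComplexOrder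

/-!
Let `G x = ∑' n : ℤ, f (x + n * b)` be the `b`-periodization of a compactly supported positive
definite `f`. The quadratic form of `f` at the points `y s + j * b`, `0 ≤ j < N`, is the `N`-th
Fejér sum of the quadratic form of `G` at the points `y s`; dividing by `N` and letting `N → ∞`
shows that `G` is positive definite, so `‖G x‖ ≤ G 0`. If `f` vanishes on `bℤ \ {0}` then
`G 0 = f 0`, and `∫ f = ∫₀ᵇ G ≤ b f(0)`. Because `a ≤ 2b`, no nonzero multiple of `b` lies in `Ω`.
Conversely the triangle `max (c - |x|) 0`, the autocorrelation of the indicator of `(0, c]`, is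
positive definite, supported in `[-c, c] ⊆ (-b, b)` for `c < b`, and has `∫ / value at 0 = c`.
-/

open ComplexConjugate Filter Topology

namespace IsPosDefFn

variable {G : Type*} [AddCommGroup G] {f : G → ℂ}

theorem sum_nonneg (hf : IsPosDefFn f) {ι : Type*} (s : Finset ι) (x : ι → G) (c : ι → ℂ) :
    0 ≤ ∑ i ∈ s, ∑ j ∈ s, c i * conj (c j) * f (x i - x j) := by
  have e := s.equivFin.symm
  simpa only [← Finset.sum_coe_sort s, ← e.sum_comp] using
    hf s.card (fun k => x (e k)) (fun k => c (e k))

theorem zero_le (hf : IsPosDefFn f) : 0 ≤ f 0 := by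
  simpa using hf 1 (fun _ => 0) (fun _ => 1)

theorem two_point (hf : IsPosDefFn f) (x : G) (l : ℂ) :
    0 ≤ f 0 + conj l * f x + l * f (-x) + l * conj l * f 0 := by
  simpa [Fin.sum_univ_two, add_assoc] using hf 2 ![x, 0] ![1, l]

theorem apply_neg (hf : IsPosDefFn f) (x : G) : f (-x) = conj (f x) := by
  have h0 := (Complex.nonneg_iff.mp hf.zero_le).2
  have h1 := (Complex.nonneg_iff.mp (hf.two_point x 1)).2
  have hI := (Complex.nonneg_iff.mp (hf.two_point x I)).2
  simp only [add_im, mul_im, conj_re, conj_im, one_re, one_im, I_re, I_im, ← h0] at h1 hI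
  apply Complex.ext <;> simp only [conj_re, conj_im] <;> linarith

theorem re_two_point (hf : IsPosDefFn f) (x : G) (l : ℂ) :
    0 ≤ (1 + normSq l) * (f 0).re + 2 * (conj l * f x).re := by
  have h := (Complex.nonneg_iff.mp (hf.two_point x l)).1
  have h0 := (Complex.nonneg_iff.mp hf.zero_le).2
  rw [hf.apply_neg] at h
  simp only [add_re, mul_re, conj_re, conj_im, normSq_apply, ← h0] at h ⊢
  linarith

theorem norm_le (hf : IsPosDefFn f) (x : G) : ‖f x‖ ≤ (f 0).re := by
  rcases eq_or_ne (f x) 0 with hx | hx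
  · simpa [hx] using (Complex.nonneg_iff.mp hf.zero_le).1
  have hr : ‖f x‖ ≠ 0 := norm_ne_zero_iff.mpr hx
  have hunit : normSq (f x / ‖f x‖) = 1 := by
    rw [normSq_div, normSq_ofReal, normSq_eq_norm_sq]
    field_simp
  have hrot : (conj (f x / ‖f x‖) * f x).re = ‖f x‖ := by
    rw [map_div₀, conj_ofReal, div_mul_eq_mul_div, conj_mul', ← ofReal_pow, ← ofReal_div,
      ofReal_re]
    field_simp
  have h := hf.re_two_point x (-(f x / ‖f x‖))
  rw [normSq_neg, map_neg, neg_mul, neg_re, hunit, hrot] at h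
  linarith

end IsPosDefFn

section Fejer

variable {E : Type*} [NormedAddCommGroup E]

-- `fejerSum g N = ∑ k ∈ Ioo (-N) N, (N - |k|) • g k`
def fejerSum (g : ℤ → E) (N : ℕ) : E :=
  ∑ j ∈ Finset.range N, ∑ i ∈ Finset.range N, g (j - i)

theorem fejerSum_succ (g : ℤ → E) (N : ℕ) :
    fejerSum g (N + 1) = fejerSum g N +
      (∑ n ∈ Finset.range (N + 1), g n + ∑ n ∈ Finset.range N, g (-(n + 1))) := by
  simp only [fejerSum, Finset.sum_range_succ', Finset.sum_add_distrib]
  push_cast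
  simp only [add_sub_add_right_eq_sub, zero_sub, sub_zero]
  abel

theorem hasSum_of_natAbs_le (g : ℤ → E) {N : ℕ} (hg : ∀ k, g k ≠ 0 → k.natAbs ≤ N) :
    HasSum g (∑ n ∈ Finset.range (N + 1), g n + ∑ n ∈ Finset.range N, g (-(n + 1))) := by
  refine HasSum.of_nat_of_neg_add_one (hasSum_sum_of_ne_finset_zero fun n hn => ?_)
    (hasSum_sum_of_ne_finset_zero fun n hn => ?_) <;>
  · rw [Finset.mem_range] at hn
    by_contra h
    have := hg _ h
    omega

theorem tendsto_inv_smul_fejerSum [NormedSpace ℝ E] {g : ℤ → E} (hg : g.support.Finite) :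
    Tendsto (fun N : ℕ => (N : ℝ)⁻¹ • fejerSum g N) atTop (𝓝 (∑' k, g k)) := by
  set M := hg.toFinset.sup Int.natAbs
  have hM : ∀ k, g k ≠ 0 → k.natAbs ≤ M := fun k hk =>
    Finset.le_sup (f := Int.natAbs) (hg.mem_toFinset.mpr hk)
  set C := fejerSum g M - (M : ℝ) • ∑' k, g k
  have hlin : ∀ N ≥ M, fejerSum g N = (N : ℝ) • ∑' k, g k + C := by
    refine Nat.le_induction (by simp [C]) fun N hN ih => ?_
    rw [fejerSum_succ, ih, (hasSum_of_natAbs_le g fun k hk => (hM k hk).trans hN).tsum_eq]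
    push_cast
    rw [add_smul, one_smul]
    abel
  have hC : Tendsto (fun N : ℕ => (N : ℝ)⁻¹ • C) atTop (𝓝 0) := by
    simpa using (tendsto_inv_atTop_nhds_zero_nat (𝕜 := ℝ)).smul_const C
  refine (add_zero (∑' k, g k) ▸ hC.const_add (∑' k, g k)).congr' ?_
  filter_upwards [eventually_ge_atTop (max M 1)] with N hN
  rw [hlin N (le_of_max_le_left hN), smul_add, smul_smul,
    inv_mul_cancel₀ (Nat.cast_ne_zero.mpr (by omega)), one_smul]

end Fejer

section Periodization

variable {E : Type*} [NormedAddCommGroup E]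

noncomputable def periodization (b : ℝ) (f : ℝ → E) (x : ℝ) : E :=
  ∑' n : ℤ, f (x + n * b)

theorem finite_setOf_intCast_mul_mem {b : ℝ} (hb : b ≠ 0) {C : Set ℝ} (hC : IsCompact C) :
    {n : ℤ | (n : ℝ) * b ∈ C}.Finite :=
  ((Homeomorph.mulRight₀ b hb).isClosedEmbedding.comp
    Int.isClosedEmbedding_coe_real).isCompact_preimage hC |>.finite_of_discrete

theorem HasCompactSupport.finite_setOf_exists_apply_add_mul_ne_zero {f : ℝ → E}
    (hf : HasCompactSupport f) {b : ℝ} (hb : b ≠ 0) {K : Set ℝ} (hK : IsCompact K) :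
    {n : ℤ | ∃ x ∈ K, f (x + n * b) ≠ 0}.Finite :=
  (finite_setOf_intCast_mul_mem hb (hf.isCompact.add hK.neg)).subset fun _ ⟨x, hx, hne⟩ =>
    ⟨_, subset_tsupport f hne, -x, Set.neg_mem_neg.mpr hx, by ring⟩

theorem HasCompactSupport.support_apply_add_mul_finite {f : ℝ → E} (hf : HasCompactSupport f)
    {b : ℝ} (hb : b ≠ 0) (x : ℝ) : (Function.support fun n : ℤ => f (x + n * b)).Finite :=
  (hf.finite_setOf_exists_apply_add_mul_ne_zero hb isCompact_singleton).subset
    fun _ hn => ⟨x, rfl, hn⟩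

theorem isPosDefFn_periodization {f : ℝ → ℂ} (hf : IsPosDefFn f) (hc : HasCompactSupport f)
    {b : ℝ} (hb : b ≠ 0) : IsPosDefFn (periodization b f) := by
  intro n y c
  have hS : ∀ N : ℕ, 0 ≤ ∑ s, ∑ t,
      c s * conj (c t) * fejerSum (fun k : ℤ => f (y s - y t + k * b)) N := by
    intro N
    have := hf.sum_nonneg (Finset.univ ×ˢ Finset.range N) (fun p => y p.1 + p.2 * b)
      (fun p => c p.1)
    simp only [Finset.sum_product] at this
    convert this using 2 with s
    rw [Finset.sum_comm]
    simp only [fejerSum, Finset.mul_sum]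
    refine Finset.sum_congr rfl fun t _ => Finset.sum_congr rfl fun j _ =>
      Finset.sum_congr rfl fun i _ => ?_
    push_cast
    ring_nf
  have hT : Tendsto (fun N : ℕ => (N : ℝ)⁻¹ • ∑ s, ∑ t,
      c s * conj (c t) * fejerSum (fun k : ℤ => f (y s - y t + k * b)) N) atTop
      (𝓝 (∑ s, ∑ t, c s * conj (c t) * periodization b f (y s - y t))) := by
    simp only [Finset.smul_sum, ← mul_smul_comm]
    exact tendsto_finsetSum _ fun s _ => tendsto_finsetSum _ fun t _ =>
      (tendsto_inv_smul_fejerSum (hc.support_apply_add_mul_finite hb _)).const_mul _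
  exact ge_of_tendsto' hT fun N => smul_nonneg (by positivity) (hS N)

theorem MeasureTheory.Integrable.hasSum_intervalIntegral_comp_add_intCast_mul [NormedSpace ℝ E]
    {f : ℝ → E} (hf : Integrable f) {b : ℝ} (hb : 0 < b) :
    HasSum (fun n : ℤ => ∫ x in (0 : ℝ)..b, f (x + n * b)) (∫ x, f x) := by
  rw [← setIntegral_univ, ← iUnion_Ioc_add_zsmul hb 0]
  convert hasSum_integral_iUnion (fun _ => measurableSet_Ioc)
    (Set.pairwise_disjoint_Ioc_add_zsmul 0 b) hf.integrableOn using 2 with n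
  rw [intervalIntegral.integral_comp_add_right, intervalIntegral.integral_of_le (by linarith)]
  simp only [zero_add, zsmul_eq_mul, Int.cast_add, Int.cast_one, add_one_mul, add_comm b]

theorem HasCompactSupport.intervalIntegral_periodization [NormedSpace ℝ E] {f : ℝ → E}
    (hf : Continuous f) (hc : HasCompactSupport f) {b : ℝ} (hb : 0 < b) :
    ∫ x in (0 : ℝ)..b, periodization b f x = ∫ x, f x := by
  set S := (hc.finite_setOf_exists_apply_add_mul_ne_zero hb.ne'
    (isCompact_uIcc (a := 0) (b := b))).toFinset
  have hzero : ∀ n ∉ S, ∀ x ∈ Set.uIcc 0 b, f (x + n * b) = 0 := fun n hn x hx =>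
    by_contra fun h => hn (Set.Finite.mem_toFinset _ |>.mpr ⟨x, hx, h⟩)
  have hG : ∀ x ∈ Set.uIcc 0 b, periodization b f x = ∑ n ∈ S, f (x + n * b) :=
    fun x hx => tsum_eq_sum fun n hn => hzero n hn x hx
  rw [intervalIntegral.integral_congr hG,
    intervalIntegral.integral_finsetSum fun (n : ℤ) _ =>
      (show Continuous fun x => f (x + n * b) by fun_prop).intervalIntegrable _ _]
  refine (hasSum_sum_of_ne_finset_zero fun n hn => ?_).unique
    ((hf.integrable_of_hasCompactSupport hc).hasSum_intervalIntegral_comp_add_intCast_mul hb)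
  rw [intervalIntegral.integral_congr (g := fun _ => 0) (hzero n hn),
    intervalIntegral.integral_zero]

end Periodization

theorem IsPosDefFn.re_integral_le {f : ℝ → ℂ} (hf : IsPosDefFn f) (hcont : Continuous f)
    (hc : HasCompactSupport f) {b : ℝ} (hb : 0 < b) (hlat : ∀ n : ℤ, n ≠ 0 → f (n * b) = 0) :
    (∫ x, f x).re ≤ b * (f 0).re := by
  have hG0 : periodization b f 0 = f 0 := by
    rw [periodization, tsum_eq_single 0 fun n hn => by simpa using hlat n hn]
    simp
  calc (∫ x, f x).re ≤ ‖∫ x in (0 : ℝ)..b, periodization b f x‖ := by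
        rw [hc.intervalIntegral_periodization hcont hb]
        exact re_le_norm _
    _ ≤ (f 0).re * |b - 0| := intervalIntegral.norm_integral_le_of_norm_le_const fun x _ =>
        hG0 ▸ (isPosDefFn_periodization hf hc hb.ne').norm_le x
    _ = b * (f 0).re := by rw [sub_zero, abs_of_pos hb, mul_comm]

theorem isPosDefFn_autocorrelation {G : Type*} [AddCommGroup G] [MeasurableSpace G]
    [MeasurableAdd G] {μ : Measure G} [μ.IsAddRightInvariant] {h : G → ℂ} (hh : MemLp h 2 μ) :
    IsPosDefFn fun x => ∫ u, h (u + x) * conj (h u) ∂μ := by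
  intro N x c
  have hint : ∀ n m,
      Integrable (fun v => c n * conj (c m) * (h (v + x n) * conj (h (v + x m)))) μ :=
    fun n m => ((hh.comp_measurePreserving (measurePreserving_add_right μ (x n))).integrable_mul
      (hh.star.comp_measurePreserving (measurePreserving_add_right μ (x m)))).const_mul _
  have hshift : ∀ n m, ∫ u, h (u + (x n - x m)) * conj (h u) ∂μ =
      ∫ v, h (v + x n) * conj (h (v + x m)) ∂μ := fun n m => by
    rw [← integral_add_right_eq_self _ (x m)]
    simp only [add_assoc, add_sub_cancel]
  have hsq : ∀ v, ∑ n, ∑ m, c n * conj (c m) * (h (v + x n) * conj (h (v + x m))) =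
      ((normSq (∑ n, c n * h (v + x n)) : ℝ) : ℂ) := fun v => by
    rw [← mul_conj, map_sum, Finset.sum_mul_sum]
    simp only [map_mul]
    exact Finset.sum_congr rfl fun _ _ => Finset.sum_congr rfl fun _ _ => by ring
  simp only [hshift, ← integral_const_mul]
  simp only [← integral_finsetSum _ fun m _ => hint _ m]
  rw [← integral_finsetSum _ fun n _ => integrable_finsetSum _ fun m _ => hint n m]
  simp only [hsq]
  rw [integral_complex_ofReal]
  exact zero_le_real.mpr (integral_nonneg fun v => normSq_nonneg _)

section Triangle

def triangle (c x : ℝ) : ℝ := max (c - |x|) 0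

theorem continuous_triangle (c : ℝ) : Continuous (triangle c) := by
  unfold triangle
  fun_prop

theorem triangle_zero {c : ℝ} (hc : 0 ≤ c) : triangle c 0 = c := by
  simp [triangle, hc]

theorem tsupport_triangle_subset (c : ℝ) : tsupport (triangle c) ⊆ Set.Icc (-c) c := by
  refine closure_minimal (fun x hx => ?_) isClosed_Icc
  have : |x| ≤ c := by
    by_contra! h
    exact hx (max_eq_right (by linarith))
  exact abs_le.mp this

theorem integral_triangle {c : ℝ} (hc : 0 ≤ c) : ∫ x, triangle c x = c ^ 2 := by
  have hIoc : ∫ x in Set.Ioi 0, max (c - x) 0 = ∫ x in (0 : ℝ)..c, (c - x) := by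
    rw [setIntegral_eq_of_subset_of_forall_sdiff_eq_zero measurableSet_Ioi
      (Set.Ioc_subset_Ioi_self : Set.Ioc 0 c ⊆ _) fun x ⟨hx0, hxc⟩ =>
        max_eq_right (sub_nonpos.mpr (not_le.mp fun h => hxc ⟨hx0, h⟩).le),
      intervalIntegral.integral_of_le hc]
    exact setIntegral_congr_fun measurableSet_Ioc fun x hx => max_eq_left (by linarith [hx.2])
  rw [show (∫ x, triangle c x) = ∫ x, max (c - |x|) 0 from rfl, integral_comp_abs
    (f := fun t => max (c - t) 0), hIoc, intervalIntegral.integral_comp_sub_left (fun x => x)]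
  simp
  ring

theorem autocorrelation_indicator_Ioc (c x : ℝ) :
    ∫ u, (Set.Ioc 0 c).indicator (fun _ => (1 : ℂ)) (u + x) *
      conj ((Set.Ioc 0 c).indicator (fun _ => 1) u) =
      triangle c x := by
  have hshift : ∀ u, (Set.Ioc 0 c).indicator (fun _ => (1 : ℂ)) (u + x) =
      (Set.Ioc (-x) (c - x)).indicator (fun _ => 1) u := fun u => by
    rw [← Set.indicator_comp_right (· + x), Set.preimage_add_const_Ioc, zero_sub]
    rfl
  have hconj : ∀ u, conj ((Set.Ioc 0 c).indicator (fun _ => (1 : ℂ)) u) =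
      (Set.Ioc 0 c).indicator (fun _ => 1) u := fun u => by
    simp only [Set.indicator_apply, apply_ite conj, map_one, map_zero]
  have hprod : ∀ u, (Set.Ioc 0 c).indicator (fun _ => (1 : ℂ)) (u + x) *
      conj ((Set.Ioc 0 c).indicator (fun _ => 1) u) =
      (Set.Ioc (-x) (c - x) ∩ Set.Ioc 0 c).indicator (fun _ => 1) u := fun u => by
    rw [hshift, hconj, ← Pi.one_def, Set.inter_indicator_one]
    rfl
  simp only [hprod]
  rw [integral_indicator_const _ (measurableSet_Ioc.inter measurableSet_Ioc), Set.Ioc_inter_Ioc,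
    Real.volume_real_Ioc, real_smul, mul_one, triangle]
  congr 2
  rcases le_total 0 x with hx | hx
  · simp [hx, abs_of_nonneg]
  · simp [hx, abs_of_nonpos]

theorem isPosDefFn_triangle (c : ℝ) : IsPosDefFn fun x => (triangle c x : ℂ) := by
  have := isPosDefFn_autocorrelation (μ := (volume : Measure ℝ))
    (memLp_indicator_const 2 (measurableSet_Ioc (a := 0) (b := c)) (1 : ℂ)
      (Or.inr measure_Ioc_lt_top.ne))
  simpa only [autocorrelation_indicator_Ioc] using this

theorem exists_isPosDefFn_tsupport_subset_Icc {c : ℝ} (hc : 0 < c) :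
    ∃ f : ℝ → ℂ, Continuous f ∧ IsPosDefFn f ∧ f ≠ 0 ∧ IsCompact (tsupport f) ∧
      tsupport f ⊆ Set.Icc (-c) c ∧ (∫ x, f x).re / (f 0).re = c := by
  have hsupp : tsupport (fun x => (triangle c x : ℂ)) ⊆ Set.Icc (-c) c :=
    (tsupport_comp_subset ofReal_zero _).trans (tsupport_triangle_subset c)
  refine ⟨fun x => (triangle c x : ℂ), continuous_ofReal.comp (continuous_triangle c),
    isPosDefFn_triangle c, fun h => ?_,
    isCompact_Icc.of_isClosed_subset (isClosed_tsupport _) hsupp, hsupp, ?_⟩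
  · simpa [triangle_zero hc.le, hc.ne'] using congrFun h 0
  · rw [integral_complex_ofReal, integral_triangle hc.le, ofReal_re, ofReal_re,
      triangle_zero hc.le, sq, mul_div_cancel_right₀ _ hc.ne']

end Triangle

theorem intCast_mul_notMem {a b : ℝ} (hb : 0 < b) (hab : a ≤ 2 * b) {n : ℤ} (hn : n ≠ 0) :
    (n : ℝ) * b ∉ Set.Ioo (-a) (-b) ∪ Set.Ioo (-b) b ∪ Set.Ioo b a := by
  have hcases : (n : ℝ) ≤ -2 ∨ (n : ℝ) = -1 ∨ (n : ℝ) = 1 ∨ 2 ≤ (n : ℝ) := by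
    rcases (by omega : n ≤ -2 ∨ n = -1 ∨ n = 1 ∨ 2 ≤ n) with h | rfl | rfl | h
    · exact Or.inl (by exact_mod_cast h)
    · simp
    · simp
    · exact Or.inr (Or.inr (Or.inr (by exact_mod_cast h)))
  rintro ((⟨h1, h2⟩ | ⟨h1, h2⟩) | ⟨h1, h2⟩) <;> rcases hcases with h | h | h | h <;>
    first | (rw [h] at h1 h2; linarith) | nlinarith

theorem turanConst_interval_minus_two_points_general
    (a b : ℝ) (hb : 0 < b) (hab : a ≤ 2 * b) :
    sSup {r : ℝ≥0∞ | ∃ f : ℝ → ℂ, Continuous f ∧ IsPosDefFn f ∧ f ≠ 0 ∧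
        IsCompact (tsupport f) ∧
        tsupport f ⊆ Set.Ioo (-a) (-b) ∪ Set.Ioo (-b) b ∪ Set.Ioo b a ∧
        r = ENNReal.ofReal ((∫ x, f x).re / (f 0).re)}
      = ENNReal.ofReal b := by
  apply le_antisymm
  · refine sSup_le ?_
    rintro r ⟨f, hcont, hf, -, hc, hsupp, rfl⟩
    have hlat : ∀ n : ℤ, n ≠ 0 → f (n * b) = 0 := fun n hn =>
      image_eq_zero_of_notMem_tsupport fun h => intCast_mul_notMem hb hab hn (hsupp h)
    exact ENNReal.ofReal_le_ofReal <| div_le_of_le_mul₀ ((norm_nonneg _).trans (hf.norm_le 0))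
      hb.le (hf.re_integral_le hcont hc hb hlat)
  · refine le_of_forall_lt fun r hr => ?_
    have hr' := (ENNReal.lt_ofReal_iff_toReal_lt hr.ne_top).mp hr
    obtain ⟨c, hrc, hcb⟩ := exists_between hr'
    obtain ⟨f, hcont, hf, hne, hc, hsupp, hratio⟩ :=
      exists_isPosDefFn_tsupport_subset_Icc (ENNReal.toReal_nonneg.trans_lt hrc)
    have hΩ : Set.Icc (-c) c ⊆ Set.Ioo (-a) (-b) ∪ Set.Ioo (-b) b ∪ Set.Ioo b a :=
      fun x hx => Or.inl (Or.inr ⟨by linarith [hx.1], by linarith [hx.2]⟩)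
    exact ((ENNReal.lt_ofReal_iff_toReal_lt hr.ne_top).mpr hrc).trans_le
      (le_sSup ⟨f, hcont, hf, hne, hc, hsupp.trans hΩ, by rw [hratio]⟩)

theorem turanConst_interval_minus_two_points
    (a b : ℝ) (hb : 0 < b) (hba : b < a) (hab : a ≤ 2 * b) :
    sSup {r : ℝ≥0∞ | ∃ f : ℝ → ℂ, Continuous f ∧ IsPosDefFn f ∧ f ≠ 0 ∧
        IsCompact (tsupport f) ∧
        tsupport f ⊆ Set.Ioo (-a) (-b) ∪ Set.Ioo (-b) b ∪ Set.Ioo b a ∧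
        r = ENNReal.ofReal ((∫ x, f x).re / (f 0).re)}
      = ENNReal.ofReal b :=
  turanConst_interval_minus_two_points_general a b hb hab
end
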